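/- For every associative Lyndon–Shirshov word w, the standard bracketing [w], defined recursively by bracketing off the longest proper associative Lyndon–Shirshov suffix, is a nonassociative Lyndon–Shirshov word whose leading associative monomial (under deg-lex, after expanding commutators in k⟨X⟩) equals w, with coefficient 1. -/

import Mathlib

/-!
Write `s ≺ w` for `llt s w`. A word is Lyndon–Shirshov iff it is `≻` all its proper suffixes.
For such a `w` take its `≺`-largest proper suffix `v`, so `w = u ++ v`. Then `v` is
Lyndon–Shirshov and it is the longest Lyndon–Shirshov proper suffix. The word `u` is
Lyndon–Shirshov: in the delicate case, a proper suffix `s` of `u` that is also a prefix,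
`u = s ++ t`, we would get `v ≺ t ++ v ≺ v`. And `v` is not below the right factor `a₂` of `[u]`,
since otherwise `v ≺ a₂ ++ v ≺ v`. Hence `[w] = [[u], [v]]` is a nonassociative Lyndon–Shirshov
word. Expanding `[f, g] = f g - g f`, the monomials of `f g` are at most `u ++ v`, with
coefficient `1` there, and those of `g f` are at most the rotation `v ++ u ≺ u ++ v`.
-/

noncomputable section

variable {X : Type*} [LinearOrder X] (k : Type*) [Field k]

/-- Lexicographic order in which a proper prefix counts as *larger* than the word. -/
def llt : List X → List X → Prop
  | [], _ => False
  | _ :: _, [] => True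
  | a :: u, b :: v => a < b ∨ (a = b ∧ llt u v)

def IsLS (w : List X) : Prop :=
  w ≠ [] ∧ ∀ u v : List X, u ≠ [] → v ≠ [] → w = u ++ v → llt (v ++ u) w

/-- deg-lex order -/
def dlt (u v : List X) : Prop :=
  u.length < v.length ∨ (u.length = v.length ∧ llt u v)

/-- the free associative algebra with basis the free monoid on X -/
abbrev FA (k : Type*) [Field k] (X : Type*) := MonoidAlgebra k (FreeMonoid X)

def gens : Set (FA k X) := Set.range fun x : X => MonoidAlgebra.single (FreeMonoid.of x) (1 : k)

def IsLeading (f : FA k X) (w : List X) : Prop :=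
  f.coeff (FreeMonoid.ofList w) ≠ 0 ∧ ∀ v : List X, f.coeff (FreeMonoid.ofList v) ≠ 0 → v = w ∨ dlt v w

/-- underlying associative word of a nonassociative word -/
def mword : FreeMagma X → List X
  | .of x => [x]
  | .mul a b => mword a ++ mword b

/-- evaluation of a nonassociative word in the free associative algebra
via the commutator bracket -/
def evalM : FreeMagma X → FA k X
  | .of x => MonoidAlgebra.single (FreeMonoid.of x) 1
  | .mul a b => evalM a * evalM b - evalM b * evalM a

/-- nonassociative Lyndon--Shirshov word -/
def IsNLS : FreeMagma X → Prop
  | .of _ => True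
  | .mul a b => IsNLS a ∧ IsNLS b ∧ IsLS (mword a ++ mword b) ∧
      (match a with
        | .of _ => True
        | .mul _ a2 => ¬ llt (mword b) (mword a2))

/-- standard bracketing tree: at each node the right factor is the longest
proper Lyndon--Shirshov suffix -/
def IsStd : FreeMagma X → Prop
  | .of _ => True
  | .mul a b => IsStd a ∧ IsStd b ∧ IsLS (mword a ++ mword b) ∧ IsLS (mword b) ∧
      ∀ s : List X, s ≠ [] → s ≠ mword a ++ mword b → s <:+ mword a ++ mword b →
        IsLS s → s.length ≤ (mword b).length

def mjoin : FreeMagma (FreeMagma X) → FreeMagma X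
  | .of t => t
  | .mul a b => .mul (mjoin a) (mjoin b)

def leaves {α : Type*} : FreeMagma α → List α
  | .of x => [x]
  | .mul a b => leaves a ++ leaves b

/-- `Occurs s t p` : `s` occurs as a subtree of `t` with exactly the word `p`
to its left -/
def Occurs (s : FreeMagma X) : FreeMagma X → List X → Prop
  | .of x, p => s = .of x ∧ p = []
  | .mul l r, p => (s = .mul l r ∧ p = []) ∨ Occurs s l p ∨
      ∃ q, Occurs s r q ∧ p = mword l ++ q


open List

theorem not_llt_nil (u : List X) : ¬ llt [] u := by simp [llt]

theorem llt_irrefl : ∀ u : List X, ¬ llt u u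
  | [] => not_llt_nil []
  | a :: u => by
      rintro (h | ⟨-, h⟩)
      · exact lt_irrefl a h
      · exact llt_irrefl u h

theorem llt_trans : ∀ {u v w : List X}, llt u v → llt v w → llt u w
  | [], _, _, h, _ => absurd h (not_llt_nil _)
  | _ :: _, [], _, _, h => absurd h (not_llt_nil _)
  | _ :: _, _ :: _, [], _, _ => trivial
  | a :: u, b :: v, c :: w, h₁, h₂ => by
      rcases h₁ with h₁ | ⟨rfl, h₁⟩ <;> rcases h₂ with h₂ | ⟨rfl, h₂⟩
      · exact Or.inl (h₁.trans h₂)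
      · exact Or.inl h₁
      · exact Or.inl h₂
      · exact Or.inr ⟨rfl, llt_trans h₁ h₂⟩

theorem llt_asymm {u v : List X} (h : llt u v) : ¬ llt v u :=
  fun h' => llt_irrefl u (llt_trans h h')

theorem llt_or_llt_of_ne : ∀ {u v : List X}, u ≠ v → llt u v ∨ llt v u
  | [], [], h => absurd rfl h
  | [], _ :: _, _ => Or.inr trivial
  | _ :: _, [], _ => Or.inl trivial
  | a :: u, b :: v, h => by
      rcases lt_trichotomy a b with hab | rfl | hab
      · exact Or.inl (Or.inl hab)
      · have huv : u ≠ v := fun e => h (e ▸ rfl)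
        exact (llt_or_llt_of_ne huv).imp (fun h' => Or.inr ⟨rfl, h'⟩) (fun h' => Or.inr ⟨rfl, h'⟩)
      · exact Or.inr (Or.inl hab)

theorem llt_append_left_iff : ∀ (x : List X) {a b : List X}, llt (x ++ a) (x ++ b) ↔ llt a b
  | [], _, _ => Iff.rfl
  | c :: x, a, b => by simp [llt, llt_append_left_iff x]

theorem not_llt_append_right (x y : List X) : ¬ llt x (x ++ y) := by
  simpa using (llt_append_left_iff x (a := []) (b := y)).not.2 (not_llt_nil y)

/-- Once neither of `x`, `z` is a prefix of the other, they are compared at a position inside both. -/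
theorem llt_append_append_iff {x z : List X} (hxz : ¬ x <+: z) (hzx : ¬ z <+: x) (y r : List X) :
    llt (x ++ y) (z ++ r) ↔ llt x z := by
  induction x generalizing z with
  | nil => exact absurd nil_prefix hxz
  | cons a x ih =>
    cases z with
    | nil => exact absurd nil_prefix hzx
    | cons b z =>
      by_cases hab : a = b
      · subst hab
        rw [prefix_cons_inj] at hxz hzx
        simp [llt, ih hxz hzx]
      · simp [llt, hab]

theorem llt_append_append_iff_of_length_eq {p q : List X} (hl : p.length = q.length) (hne : p ≠ q)
    (a b : List X) : llt (p ++ a) (q ++ b) ↔ llt p q :=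
  llt_append_append_iff (fun hp => hne (hp.eq_of_length hl))
    (fun hq => hne (hq.eq_of_length hl.symm).symm) a b

section ProperSuffix

variable {α : Type*}

/-- `s` is a nonempty proper suffix of `w`. -/
def IsProperSuffix (s w : List α) : Prop := s ≠ [] ∧ s ≠ w ∧ s <:+ w

theorem IsProperSuffix.length_lt {s w : List α} (h : IsProperSuffix s w) : s.length < w.length :=
  lt_of_le_of_ne h.2.2.length_le fun e => h.2.1 (h.2.2.eq_of_length e)

theorem IsProperSuffix.trans {s t w : List α} (h₁ : IsProperSuffix s t) (h₂ : IsProperSuffix t w) :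
    IsProperSuffix s w :=
  ⟨h₁.1, fun e => (e ▸ h₁.length_lt.trans h₂.length_lt).false, h₁.2.2.trans h₂.2.2⟩

theorem isProperSuffix_append {u v : List α} (hu : u ≠ []) (hv : v ≠ []) :
    IsProperSuffix v (u ++ v) :=
  ⟨hv, fun e => hu (self_eq_append_left.1 e), suffix_append u v⟩

theorem IsProperSuffix.append_right {s u : List α} (h : IsProperSuffix s u) (v : List α) :
    IsProperSuffix (s ++ v) (u ++ v) := by
  obtain ⟨hs, hsu, r, rfl⟩ := h
  exact ⟨by simp [hs], fun e => hsu (append_cancel_right e), r, by simp⟩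

theorem isProperSuffix_cons_iff {s t : List α} {a : α} :
    IsProperSuffix s (a :: t) ↔ s ≠ [] ∧ s <:+ t := by
  refine ⟨fun ⟨hs, hne, hst⟩ => ⟨hs, (suffix_cons_iff.1 hst).resolve_left hne⟩,
    fun ⟨hs, hst⟩ => ⟨hs, fun e => ?_, hst.trans (suffix_cons a t)⟩⟩
  have := e ▸ hst.length_le
  simp at this

end ProperSuffix

theorem isLS_iff {w : List X} : IsLS w ↔ w ≠ [] ∧ ∀ s, IsProperSuffix s w → llt s w := by
  refine ⟨fun ⟨hw, hrot⟩ => ⟨hw, ?_⟩, fun ⟨hw, hsuf⟩ => ⟨hw, ?_⟩⟩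
  · rintro s ⟨hs, hsw, u, rfl⟩
    have hu : u ≠ [] := by rintro rfl; exact hsw rfl
    have hw_pre : ¬ u ++ s <+: s := fun h => hu (by simpa using h.length_le)
    by_cases hs_pre : s <+: u ++ s
    · -- with `u ++ s = s ++ t`, the rotations `s ++ u` and `t ++ s` give `u ≺ t` and `t ≺ u`
      exfalso
      obtain ⟨t, ht⟩ := hs_pre
      have hut : llt u t := by
        have := hrot u s hu hs rfl
        rwa [← ht, llt_append_left_iff] at this
      have hlen : t.length = u.length := by
        have := congrArg length ht
        simp only [length_append] at this
        omega
      have ht_ne : t ≠ [] := by rintro rfl; exact hu (length_eq_zero_iff.1 hlen.symm)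
      have hne : t ≠ u := by rintro rfl; exact llt_irrefl t hut
      have htu : llt t u := by
        have := hrot s t hs ht_ne ht.symm
        rwa [llt_append_append_iff_of_length_eq hlen hne] at this
      exact llt_asymm hut htu
    · simpa using (llt_append_append_iff hs_pre hw_pre u []).1 (by simpa using hrot u s hu hs rfl)
  · rintro u v hu hv rfl
    have hlt := hsuf v (isProperSuffix_append hu hv)
    have hv_pre : ¬ v <+: u ++ v := fun ⟨r, hr⟩ => not_llt_append_right v r (hr ▸ hlt)
    have hw_pre : ¬ u ++ v <+: v := fun h => hu (by simpa using h.length_le)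
    simpa using (llt_append_append_iff hv_pre hw_pre u []).2 hlt

theorem exists_maximal_suffix : ∀ {t : List X}, t ≠ [] →
    ∃ v, v ≠ [] ∧ v <:+ t ∧ ∀ s, s ≠ [] → s <:+ t → s = v ∨ llt s v
  | [], h => absurd rfl h
  | [a], _ => ⟨[a], by simp, suffix_refl _, fun s hs hst =>
      Or.inl ((suffix_cons_iff.1 hst).resolve_right fun h => hs (suffix_nil.1 h))⟩
  | a :: b :: t, _ => by
    obtain ⟨v, hv, hvt, hmax⟩ := exists_maximal_suffix (t := b :: t) (cons_ne_nil b t)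
    have hne : a :: b :: t ≠ v := fun e => by simpa [← e] using hvt.length_le
    rcases llt_or_llt_of_ne hne with hlt | hlt
    · refine ⟨v, hv, hvt.trans (suffix_cons a _), fun s hs hst => ?_⟩
      rcases suffix_cons_iff.1 hst with rfl | hst
      exacts [Or.inr hlt, hmax s hs hst]
    · refine ⟨a :: b :: t, cons_ne_nil a _, suffix_refl _, fun s hs hst => ?_⟩
      rcases suffix_cons_iff.1 hst with rfl | hst
      · exact Or.inl rfl
      · rcases hmax s hs hst with rfl | hsv
        exacts [Or.inr hlt, Or.inr (llt_trans hsv hlt)]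

def IsMaxProperSuffix (v w : List X) : Prop :=
  IsProperSuffix v w ∧ ∀ s, IsProperSuffix s w → s = v ∨ llt s v

theorem exists_isMaxProperSuffix {w : List X} (hw : 2 ≤ w.length) : ∃ v, IsMaxProperSuffix v w := by
  obtain ⟨a, t, rfl⟩ := exists_cons_of_length_pos (by omega : 0 < w.length)
  obtain ⟨v, hv, hvt, hmax⟩ := exists_maximal_suffix (t := t) (by rintro rfl; simp at hw)
  exact ⟨v, isProperSuffix_cons_iff.2 ⟨hv, hvt⟩,
    fun s hs => hmax s (isProperSuffix_cons_iff.1 hs).1 (isProperSuffix_cons_iff.1 hs).2⟩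

namespace IsMaxProperSuffix

variable {v w : List X} (hv : IsMaxProperSuffix v w)
include hv

theorem llt_of_isProperSuffix {s : List X} (hs : IsProperSuffix s w) (hsv : s ≠ v) : llt s v :=
  (hv.2 s hs).resolve_left hsv

theorem isLS : IsLS v :=
  isLS_iff.2 ⟨hv.1.1, fun _ hs => hv.llt_of_isProperSuffix (hs.trans hv.1) hs.2.1⟩

theorem length_le {s : List X} (hs : IsProperSuffix s w) (hsLS : IsLS s) : s.length ≤ v.length := by
  by_contra! hlen
  have hvs : IsProperSuffix v s :=
    ⟨hv.1.1, fun e => (e ▸ hlen).false, suffix_of_suffix_length_le hv.1.2.2 hs.2.2 hlen.le⟩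
  exact llt_asymm ((isLS_iff.1 hsLS).2 v hvs)
    (hv.llt_of_isProperSuffix hs fun e => (e ▸ hlen).false)

theorem isLS_left {u : List X} (hw : IsLS w) (huv : u ++ v = w) : IsLS u := by
  subst huv
  have hu : u ≠ [] := by rintro rfl; exact hv.1.2.1 rfl
  refine isLS_iff.2 ⟨hu, fun s hs => ?_⟩
  have hsv_lt : llt (s ++ v) (u ++ v) := (isLS_iff.1 hw).2 _ (hs.append_right v)
  by_cases hs_pre : s <+: u
  · -- with `u = s ++ t`, both `v ≺ t ++ v` (from `w`) and `t ++ v ≺ v` (maximality of `v`)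
    exfalso
    obtain ⟨t, rfl⟩ := hs_pre
    have ht : t ≠ [] := by rintro rfl; exact hs.2.1 (append_nil s).symm
    have htv : IsProperSuffix (t ++ v) (s ++ t ++ v) := by
      rw [append_assoc]; exact isProperSuffix_append hs.1 (by simp [ht])
    rw [append_assoc, llt_append_left_iff] at hsv_lt
    exact llt_asymm hsv_lt
      (hv.llt_of_isProperSuffix htv fun e => ht (append_left_eq_self.1 e))
  · have hu_pre : ¬ u <+: s := fun h => (h.length_le.trans_lt hs.length_lt).false
    exact (llt_append_append_iff hs_pre hu_pre v v).1 hsv_lt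

theorem not_llt {a₁ a₂ : List X} (ha₁ : a₁ ≠ []) (ha₂ : a₂ ≠ []) (h : a₁ ++ a₂ ++ v = w) :
    ¬ llt v a₂ := by
  intro hlt
  have hv_pre : ¬ v <+: a₂ := fun ⟨r, hr⟩ => not_llt_append_right v r (hr ▸ hlt)
  have hlt' : llt v (a₂ ++ v) := by
    by_cases ha_pre : a₂ <+: v
    · -- `v = a₂ ++ r`, and `r ≺ v` as `v` is Lyndon–Shirshov
      obtain ⟨r, rfl⟩ := ha_pre
      have hr : r ≠ [] := by rintro rfl; exact hv_pre (by simp)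
      rw [llt_append_left_iff]
      exact (isLS_iff.1 hv.isLS).2 r (isProperSuffix_append ha₂ hr)
    · simpa using (llt_append_append_iff hv_pre ha_pre [] v).2 hlt
  have hprop : IsProperSuffix (a₂ ++ v) w := by
    rw [← h, append_assoc]; exact isProperSuffix_append ha₁ (by simp [ha₂])
  exact llt_asymm hlt' (hv.llt_of_isProperSuffix hprop fun e => ha₂ (append_left_eq_self.1 e))

end IsMaxProperSuffix

theorem mword_ne_nil {α : Type*} : ∀ t : FreeMagma α, mword t ≠ []
  | .of _ => cons_ne_nil _ _
  | .mul a _ => fun h => mword_ne_nil a (append_eq_nil_iff.1 h).1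

theorem one_lt_length_mword_mul {α : Type*} (a b : FreeMagma α) : 1 < (mword (.mul a b)).length := by
  have := length_pos_iff.2 (mword_ne_nil a)
  have := length_pos_iff.2 (mword_ne_nil b)
  simp only [mword, length_append]
  omega

theorem IsStd.eq_of_mword_eq : ∀ {t t' : FreeMagma X}, IsStd t → IsStd t' → mword t = mword t' →
    t = t'
  | .of x, .of y, _, _, h => by rw [(by simpa [mword] using h : x = y)]
  | .of x, .mul a b, _, _, h => absurd (h ▸ one_lt_length_mword_mul a b) (by simp [mword])
  | .mul a b, .of x, _, _, h => absurd (h ▸ one_lt_length_mword_mul a b) (by simp [mword])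
  | .mul a b, .mul a' b', ⟨ha, hb, _, hbLS, hbmax⟩, ⟨ha', hb', _, hbLS', hbmax'⟩, h => by
    change mword a ++ mword b = mword a' ++ mword b' at h
    have hsuf : IsProperSuffix (mword b) (mword a' ++ mword b') :=
      h ▸ isProperSuffix_append (mword_ne_nil a) (mword_ne_nil b)
    have hsuf' : IsProperSuffix (mword b') (mword a ++ mword b) :=
      h ▸ isProperSuffix_append (mword_ne_nil a') (mword_ne_nil b')
    have hle := hbmax' _ hsuf.1 hsuf.2.1 hsuf.2.2 hbLS
    have hge := hbmax _ hsuf'.1 hsuf'.2.1 hsuf'.2.2 hbLS'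
    have hbb' : mword b = mword b' :=
      (suffix_of_suffix_length_le hsuf.2.2 (suffix_append _ _) hle).eq_of_length (hle.antisymm hge)
    rw [hbb', append_cancel_right_eq] at h
    rw [ha.eq_of_mword_eq ha' h, hb.eq_of_mword_eq hb' hbb']

theorem exists_isStd_isNLS {w : List X} (hw : IsLS w) :
    ∃ t : FreeMagma X, mword t = w ∧ IsStd t ∧ IsNLS t := by
  rcases lt_or_ge w.length 2 with hlen | hlen
  · obtain ⟨x, rfl⟩ : ∃ x, w = [x] :=
      length_eq_one_iff.1 (by have := length_pos_iff.2 hw.1; omega)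
    exact ⟨.of x, rfl, trivial, trivial⟩
  obtain ⟨v, hv⟩ := exists_isMaxProperSuffix hlen
  obtain ⟨u, huv⟩ := hv.1.2.2
  have hu : u ≠ [] := by rintro rfl; exact hv.1.2.1 (by simpa using huv)
  obtain ⟨a, rfl, ha, ha'⟩ := exists_isStd_isNLS (hv.isLS_left hw huv)
  obtain ⟨b, rfl, hb, hb'⟩ := exists_isStd_isNLS hv.isLS
  subst huv
  refine ⟨.mul a b, rfl, ⟨ha, hb, hw, hv.isLS, fun s h₁ h₂ h₃ hs => hv.length_le ⟨h₁, h₂, h₃⟩ hs⟩,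
    ha', hb', hw, ?_⟩
  cases a with
  | of _ => trivial
  | mul a₁ a₂ => exact hv.not_llt (mword_ne_nil a₁) (mword_ne_nil a₂) rfl
termination_by w.length
decreasing_by
  all_goals
    rw [← huv, length_append]
    have := length_pos_iff.2 hu
    have := length_pos_iff.2 hv.1.1
    omega

section Leading

variable {R : Type*} [Ring R]

/-- `f` is homogeneous of degree `w.length` and each of its monomials is `w` or `llt`-below `w`. -/
def MonomialsLE (f : MonoidAlgebra R (FreeMonoid X)) (w : List X) : Prop :=
  ∀ m : List X, f.coeff (FreeMonoid.ofList m) ≠ 0 → m.length = w.length ∧ (m = w ∨ llt m w)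

def IsMonicLead (f : MonoidAlgebra R (FreeMonoid X)) (w : List X) : Prop :=
  f.coeff (FreeMonoid.ofList w) = 1 ∧ MonomialsLE f w

theorem exists_eq_append_of_coeff_mul_ne_zero {α : Type*} {f g : MonoidAlgebra R (FreeMonoid α)}
    {m : List α} (h : (f * g).coeff (FreeMonoid.ofList m) ≠ 0) :
    ∃ p q, f.coeff (FreeMonoid.ofList p) ≠ 0 ∧ g.coeff (FreeMonoid.ofList q) ≠ 0 ∧ m = p ++ q := by
  classical
  obtain ⟨a, ha, b, hb, hab⟩ :=
    Finset.mem_mul.1 (MonoidAlgebra.support_coeff_mul_subset f g (Finsupp.mem_support_iff.2 h))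
  exact ⟨a.toList, b.toList, Finsupp.mem_support_iff.1 ha, Finsupp.mem_support_iff.1 hb,
    congrArg FreeMonoid.toList hab.symm⟩

theorem MonomialsLE.mul {f g : MonoidAlgebra R (FreeMonoid X)} {u v : List X}
    (hf : MonomialsLE f u) (hg : MonomialsLE g v) : MonomialsLE (f * g) (u ++ v) := by
  intro m hm
  obtain ⟨p, q, hp, hq, rfl⟩ := exists_eq_append_of_coeff_mul_ne_zero hm
  obtain ⟨hpl, rfl | hpu⟩ := hf p hp
  · obtain ⟨hql, rfl | hqv⟩ := hg q hq
    · exact ⟨rfl, Or.inl rfl⟩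
    · exact ⟨by simp [hql], Or.inr ((llt_append_left_iff p).2 hqv)⟩
  · refine ⟨by simp [hpl, (hg q hq).1], Or.inr ?_⟩
    exact (llt_append_append_iff_of_length_eq hpl (fun e => llt_irrefl u (e ▸ hpu)) q v).2 hpu

theorem MonomialsLE.llt_of_llt {f : MonoidAlgebra R (FreeMonoid X)} {w w' : List X}
    (hf : MonomialsLE f w') (hl : w'.length = w.length) (h : llt w' w) :
    ∀ m : List X, f.coeff (FreeMonoid.ofList m) ≠ 0 → m.length = w.length ∧ llt m w := by
  intro m hm
  obtain ⟨hml, rfl | hmw⟩ := hf m hm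
  exacts [⟨hl, h⟩, ⟨hml.trans hl, llt_trans hmw h⟩]

theorem coeff_mul_ofList_append {α : Type*} {f g : MonoidAlgebra R (FreeMonoid α)} {u : List α}
    (hf : ∀ m : List α, f.coeff (FreeMonoid.ofList m) ≠ 0 → m.length = u.length) (v : List α) :
    (f * g).coeff (FreeMonoid.ofList (u ++ v)) =
      f.coeff (FreeMonoid.ofList u) * g.coeff (FreeMonoid.ofList v) := by
  refine MonoidAlgebra.coeff_mul_mul_of_uniqueMul fun a b ha _ hab => ?_
  have := append_inj (congrArg FreeMonoid.toList hab) (hf a.toList (Finsupp.mem_support_iff.1 ha))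
  exact ⟨congrArg FreeMonoid.ofList this.1, congrArg FreeMonoid.ofList this.2⟩

theorem isMonicLead_single (x : X) :
    IsMonicLead (MonoidAlgebra.single (FreeMonoid.of x) (1 : R)) [x] := by
  classical
  refine ⟨by simp, fun m hm => ?_⟩
  have : FreeMonoid.ofList m = FreeMonoid.of x := by
    by_contra hne
    simp [MonoidAlgebra.coeff_single, Ne.symm hne] at hm
  obtain rfl : m = [x] := FreeMonoid.ofList.injective this
  exact ⟨rfl, Or.inl rfl⟩

/-- The monomials of `g * f` are at most `v ++ u`, which lies below `u ++ v`. -/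
theorem IsMonicLead.commutator {f g : MonoidAlgebra R (FreeMonoid X)} {u v : List X}
    (hf : IsMonicLead f u) (hg : IsMonicLead g v) (hrot : llt (v ++ u) (u ++ v)) :
    IsMonicLead (f * g - g * f) (u ++ v) := by
  have hfg := hf.2.mul hg.2
  have hgf := (hg.2.mul hf.2).llt_of_llt (by simp [add_comm]) hrot
  have hgf_zero : (g * f).coeff (FreeMonoid.ofList (u ++ v)) = 0 := by
    by_contra h
    exact llt_irrefl _ (hgf _ h).2
  refine ⟨?_, fun m hm => ?_⟩
  · rw [MonoidAlgebra.coeff_sub, Finsupp.sub_apply,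
      coeff_mul_ofList_append fun m hm => (hf.2 m hm).1, hf.1, hg.1, hgf_zero, mul_one, sub_zero]
  · rw [MonoidAlgebra.coeff_sub, Finsupp.sub_apply] at hm
    by_cases h : (f * g).coeff (FreeMonoid.ofList m) = 0
    · rw [h, zero_sub, neg_ne_zero] at hm
      exact ⟨(hgf m hm).1, Or.inr (hgf m hm).2⟩
    · exact hfg m h

end Leading

theorem IsNLS.isMonicLead : ∀ {t : FreeMagma X}, IsNLS t → IsMonicLead (evalM k t) (mword t)
  | .of x, _ => isMonicLead_single x
  | .mul a b, ⟨ha, hb, hab, _⟩ =>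
    (ha.isMonicLead.commutator hb.isMonicLead
      (hab.2 (mword a) (mword b) (mword_ne_nil a) (mword_ne_nil b) rfl))

theorem IsMonicLead.isLeading {f : FA k X} {w : List X} (h : IsMonicLead f w) :
    IsLeading k f w := by
  refine ⟨h.1 ▸ one_ne_zero, fun m hm => ?_⟩
  obtain ⟨hl, hmw⟩ := h.2 m hm
  exact hmw.imp_right fun hlt => Or.inr ⟨hl, hlt⟩

/-- For every associative Lyndon--Shirshov word `w` there is a (unique) standard
bracketing `t` of `w` (obtained by recursively bracketing off the longest proper
Lyndon--Shirshov suffix); it is a nonassociative Lyndon--Shirshov word, and its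
commutator expansion in the free associative algebra has deg-lex leading
monomial `w` with coefficient 1. -/
theorem stmt_7 (w : List X) (hw : IsLS w) :
    ∃ t : FreeMagma X, mword t = w ∧ IsStd t ∧
      (∀ t' : FreeMagma X, mword t' = w → IsStd t' → t' = t) ∧
      IsNLS t ∧ (evalM k t).coeff (FreeMonoid.ofList w) = 1 ∧ IsLeading k (evalM k t) w := by
  obtain ⟨t, rfl, hstd, hnls⟩ := exists_isStd_isNLS hw
  have hlead := hnls.isMonicLead k
  exact ⟨t, rfl, hstd, fun t' ht' hstd' => hstd'.eq_of_mword_eq hstd ht', hnls, hlead.1,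
    hlead.isLeading k⟩
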